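/- arXiv:2107.00527 — 4 statements merged into one kernel-verified Lean document; each statement's English description precedes it below -/
import Mathlib

section
/- Let R_1, …, R_{n+1} be exchangeable real-valued random variables. For a significance level α ∈ (0,1), define δ = (1 + |{i ∈ {1,…,n} : R_i ≥ R_{n+1}}|)/(n+1). Then P(δ > α) ≥ 1 − α. -/
/-!
The conformal p-value is `δ = c / (n + 1)`, where `c` counts the scores that are at least the
test score `R_{n+1}` (the test score itself included). For any vector `x` and any `k`, at most `k`
indices `j` have `#{i | x j ≤ x i} ≤ k`: all of them lie above the smallest one among them.
Exchangeability makes the probability of `#{i | R_j ≤ R_i} ≤ k` the same for every `j`, so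
`(n + 1) P(c ≤ k) ≤ k`; with `k = ⌊α (n + 1)⌋` this gives `P(δ ≤ α) ≤ α`.
-/

open MeasureTheory Finset ENNReal

namespace Conformal

section Counting

variable {ι α : Type*} [Fintype ι] [LinearOrder α]

def upperCount (x : ι → α) (j : ι) : ℕ :=
  #{i | x j ≤ x i}

lemma upperCount_comp_perm (x : ι → α) (σ : Equiv.Perm ι) (j : ι) :
    upperCount (x ∘ σ) j = upperCount x (σ j) := by
  simp only [upperCount, card_filter, Function.comp_apply]
  exact Equiv.sum_comp σ fun i => if x (σ j) ≤ x i then 1 else 0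

lemma card_upperCount_le_le (x : ι → α) (k : ℕ) : #{j | upperCount x j ≤ k} ≤ k := by
  obtain hempty | hne := (univ.filter fun j => upperCount x j ≤ k).eq_empty_or_nonempty
  · simp [hempty]
  obtain ⟨j₀, hj₀, hmin⟩ := exists_min_image _ x hne
  calc #{j | upperCount x j ≤ k}
      ≤ upperCount x j₀ := card_le_card fun j hj => mem_filter.mpr ⟨mem_univ j, hmin j hj⟩
    _ ≤ k := (mem_filter.mp hj₀).2

lemma upperCount_last {n : ℕ} (x : Fin (n + 1) → α) :
    upperCount x (Fin.last n) = #{i : Fin n | x (Fin.last n) ≤ x i.castSucc} + 1 := by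
  rw [upperCount, card_filter, Fin.sum_univ_castSucc, card_filter]
  simp

variable [TopologicalSpace α] [OrderClosedTopology α] [SecondCountableTopology α]
  [MeasurableSpace α] [OpensMeasurableSpace α]

lemma measurable_upperCount (j : ι) : Measurable fun x : ι → α => upperCount x j := by
  simp only [upperCount, card_filter]
  exact measurable_sum _ fun i _ =>
    Measurable.ite (measurableSet_le (measurable_pi_apply j) (measurable_pi_apply i))
      measurable_const measurable_const

end Counting

open scoped Classical in
lemma sum_measure_le_of_card_mem_le {Ω ι : Type*} [MeasurableSpace Ω] [Fintype ι]
    (μ : Measure Ω) {A : ι → Set Ω} (hA : ∀ j, MeasurableSet (A j)) (k : ℕ)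
    (hcard : ∀ ω, #{j | ω ∈ A j} ≤ k) :
    ∑ j, μ (A j) ≤ k * μ Set.univ := by
  calc ∑ j, μ (A j)
      = ∑ j, ∫⁻ ω, (A j).indicator 1 ω ∂μ := by simp_rw [lintegral_indicator_one (hA _)]
    _ = ∫⁻ ω, ∑ j, (A j).indicator 1 ω ∂μ :=
        (lintegral_finsetSum _ fun j _ => measurable_const.indicator (hA j)).symm
    _ ≤ ∫⁻ _, (k : ℝ≥0∞) ∂μ := lintegral_mono fun ω => by
        simpa [Set.indicator_apply, ← Nat.cast_sum, ← card_filter] using hcard ω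
    _ = k * μ Set.univ := lintegral_const _

section Exchangeable

variable {Ω ι α : Type*} [MeasurableSpace Ω] {P : Measure Ω} [MeasurableSpace α]
  {X : Ω → ι → α}

lemma measure_preimage_comp_perm (hX : Measurable X) {σ : Equiv.Perm ι}
    (hσ : P.map (fun ω => X ω ∘ σ) = P.map X) {S : Set (ι → α)} (hS : MeasurableSet S) :
    P ((fun ω => X ω ∘ σ) ⁻¹' S) = P (X ⁻¹' S) := by
  have hXσ : Measurable fun ω => X ω ∘ σ :=
    measurable_pi_lambda _ fun i => (measurable_pi_apply (σ i)).comp hX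
  rw [← Measure.map_apply hXσ hS, hσ, Measure.map_apply hX hS]

variable [IsProbabilityMeasure P] [Fintype ι] [LinearOrder α] [TopologicalSpace α]
  [OrderClosedTopology α] [SecondCountableTopology α] [OpensMeasurableSpace α]

theorem card_mul_measure_upperCount_le (hX : Measurable X)
    (hexch : ∀ σ : Equiv.Perm ι, P.map (fun ω => X ω ∘ σ) = P.map X) (j : ι) (k : ℕ) :
    Fintype.card ι * P {ω | upperCount (X ω) j ≤ k} ≤ k := by
  classical
  have hS : MeasurableSet {x : ι → α | upperCount x j ≤ k} :=
    measurableSet_le (measurable_upperCount j) measurable_const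
  have hsame : ∀ i, P {ω | upperCount (X ω) i ≤ k} = P {ω | upperCount (X ω) j ≤ k} := by
    intro i
    have := measure_preimage_comp_perm hX (hexch (Equiv.swap j i)) hS
    simpa only [Set.preimage_ofPred_eq, upperCount_comp_perm, Equiv.swap_apply_left] using this
  calc Fintype.card ι * P {ω | upperCount (X ω) j ≤ k}
      = ∑ i, P {ω | upperCount (X ω) i ≤ k} := by simp [hsame]
    _ ≤ k * P Set.univ := sum_measure_le_of_card_mem_le P
        (fun i => measurableSet_le ((measurable_upperCount i).comp hX) measurable_const) k
        fun ω => by convert card_upperCount_le_le (X ω) k; exact Iff.rfl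
    _ = k := by simp

theorem measure_upperCount_le_mul_card_le (hX : Measurable X)
    (hexch : ∀ σ : Equiv.Perm ι, P.map (fun ω => X ω ∘ σ) = P.map X) (j : ι)
    {a : ℝ} (ha : 0 ≤ a) :
    P {ω | (upperCount (X ω) j : ℝ) ≤ a * Fintype.card ι} ≤ ENNReal.ofReal a := by
  set k := ⌊a * Fintype.card ι⌋₊
  have hevent : {ω | (upperCount (X ω) j : ℝ) ≤ a * Fintype.card ι}
      = {ω | upperCount (X ω) j ≤ k} := by
    ext ω
    exact (Nat.le_floor_iff (by positivity : 0 ≤ a * Fintype.card ι)).symm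
  have : Nonempty ι := ⟨j⟩
  have hcard : (Fintype.card ι : ℝ≥0∞) ≠ 0 := by simp
  rw [hevent, ← ENNReal.mul_le_mul_iff_right hcard (natCast_ne_top _)]
  calc Fintype.card ι * P {ω | upperCount (X ω) j ≤ k}
      ≤ k := card_mul_measure_upperCount_le hX hexch j k
    _ = ENNReal.ofReal k := (ofReal_natCast k).symm
    _ ≤ ENNReal.ofReal (a * Fintype.card ι) := ofReal_le_ofReal (Nat.floor_le (by positivity))
    _ = Fintype.card ι * ENNReal.ofReal a := by
        rw [ofReal_mul ha, ofReal_natCast, mul_comm]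

end Exchangeable

end Conformal

open Conformal in
/-- Finite-sample validity of split conformal prediction: for exchangeable
nonconformity scores `R_1,…,R_{n+1}`, the conformal p-value
`δ = (1 + #{i ≤ n : R_i ≥ R_{n+1}})/(n+1)` satisfies `P(δ > α) ≥ 1 − α`. -/
theorem stmt3 {Ω : Type*} [MeasurableSpace Ω] (P : Measure Ω) [IsProbabilityMeasure P]
    (n : ℕ) (R : Fin (n + 1) → Ω → ℝ) (hmeas : ∀ i, Measurable (R i))
    (hexch : ∀ σ : Equiv.Perm (Fin (n + 1)),
      P.map (fun ω i => R (σ i) ω) = P.map (fun ω i => R i ω))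
    (α : ℝ) (hα : α ∈ Set.Ioo (0 : ℝ) 1) :
    ENNReal.ofReal (1 - α) ≤
      P {ω | α < (1 + ((Finset.univ.filter
        (fun i : Fin n => R (Fin.last n) ω ≤ R i.castSucc ω)).card : ℝ)) / (n + 1)} := by
  set E := {ω | α < (1 + ((Finset.univ.filter
    (fun i : Fin n => R (Fin.last n) ω ≤ R i.castSucc ω)).card : ℝ)) / (n + 1)}
  have hcompl : Eᶜ = {ω | (upperCount (fun i => R i ω) (Fin.last n) : ℝ)
      ≤ α * Fintype.card (Fin (n + 1))} := by
    ext ω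
    simp [E, upperCount_last, div_le_iff₀ (by positivity : (0 : ℝ) < n + 1), add_comm]
  have hEc : P Eᶜ ≤ ENNReal.ofReal α := hcompl ▸
    measure_upperCount_le_mul_card_le (measurable_pi_lambda _ hmeas) hexch _ hα.1.le
  calc ENNReal.ofReal (1 - α) = 1 - ENNReal.ofReal α := by
        rw [ofReal_sub _ hα.1.le, ofReal_one]
    _ ≤ 1 - P Eᶜ := tsub_le_tsub_left hEc 1
    _ ≤ P E := tsub_le_iff_right.mpr (by simpa using measure_univ_le_add_compl (μ := P) E)
end

section
/- Let R_1, …, R_{n+1} be exchangeable real-valued random variables with a continuous joint distribution (so ties have probability zero). For α ∈ (0,1), define δ = (1 + |{i ∈ {1,…,n} : R_i ≥ R_{n+1}}|)/(n+1). Then P(δ > α) = 1 − ⌊α(n+1)⌋/(n+1). -/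
/-!
For almost every outcome the scores are distinct, and then the number of other scores at least
`R_t` takes each value `0, …, n` for exactly one index `t`. By exchangeability the probability
that this count equals `j` does not depend on `t`, so the count of the last score is uniform on
`{0, …, n}`. The event `δ > α` says exactly that this count is at least `⌊α (n + 1)⌋`.
-/

open MeasureTheory Finset ENNReal Function

section UpperRank

variable {ι α : Type*} [Fintype ι] [DecidableEq ι] [LinearOrder α]

def upperRank (v : ι → α) (t : ι) : ℕ := #{i | i ≠ t ∧ v t ≤ v i}

theorem upperRank_lt_card (v : ι → α) (t : ι) : upperRank v t < Fintype.card ι :=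
  card_lt_card (filter_ssubset.2 ⟨t, mem_univ t, by simp⟩)

theorem upperRank_comp_perm (v : ι → α) (σ : Equiv.Perm ι) (t : ι) :
    upperRank (v ∘ σ) t = upperRank v (σ t) :=
  card_equiv σ (by simp)

theorem upperRank_lt_upperRank {v : ι → α} {s t : ι} (h : v t < v s) :
    upperRank v s < upperRank v t := by
  refine card_lt_card ((ssubset_iff_of_subset fun i hi => ?_).2 ⟨s, ?_, by simp⟩)
  · simp only [mem_filter, mem_univ, true_and] at hi ⊢
    exact ⟨by rintro rfl; exact (h.trans_le hi.2).false, h.le.trans hi.2⟩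
  · simpa [h.le] using fun hst : s = t => by subst hst; exact lt_irrefl _ h

theorem upperRank_injective {v : ι → α} (hv : Injective v) : Injective (upperRank v) := by
  intro s t h
  rcases lt_trichotomy (v s) (v t) with hlt | heq | hgt
  · exact absurd h (upperRank_lt_upperRank hlt).ne'
  · exact hv heq
  · exact absurd h (upperRank_lt_upperRank hgt).ne

theorem exists_upperRank_eq {v : ι → α} (hv : Injective v) {j : ℕ} (hj : j < Fintype.card ι) :
    ∃ t, upperRank v t = j := by
  let f : ι → Fin (Fintype.card ι) := fun t => ⟨upperRank v t, upperRank_lt_card v t⟩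
  have hf : Injective f := fun s t h => upperRank_injective hv (congrArg Fin.val h)
  obtain ⟨t, ht⟩ := ((Fintype.bijective_iff_injective_and_card f).2 ⟨hf, by simp⟩).2 ⟨j, hj⟩
  exact ⟨t, congrArg Fin.val ht⟩

theorem card_filter_le_castSucc_eq_upperRank {n : ℕ} (v : Fin (n + 1) → α) :
    #{i : Fin n | v (Fin.last n) ≤ v i.castSucc} = upperRank v (Fin.last n) := by
  simp only [upperRank, card_filter, Fin.sum_univ_castSucc]
  simp [Fin.castSucc_ne_last]

end UpperRank

section Exchangeable

variable {Ω ι : Type*} [MeasurableSpace Ω] [Fintype ι] [DecidableEq ι] {P : Measure Ω}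
  {X : Ω → ι → ℝ}

def Exchangeable (P : Measure Ω) (X : Ω → ι → ℝ) : Prop :=
  ∀ σ : Equiv.Perm ι, P.map (fun ω i => X ω (σ i)) = P.map X

theorem measurable_upperRank (t : ι) : Measurable fun v : ι → ℝ => upperRank v t := by
  simp_rw [upperRank, card_filter]
  refine Finset.measurable_sum _ fun i _ => Measurable.ite ?_ measurable_const measurable_const
  exact (MeasurableSet.const _).inter
    (measurableSet_le (measurable_pi_apply t) (measurable_pi_apply i))

theorem measurableSet_upperRank_eq (hX : Measurable X) (t : ι) (j : ℕ) :
    MeasurableSet {ω | upperRank (X ω) t = j} :=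
  (measurable_upperRank t).comp hX (measurableSet_singleton j)

theorem Exchangeable.measure_upperRank_eq (hexch : Exchangeable P X) (hX : Measurable X)
    (s t : ι) (j : ℕ) :
    P {ω | upperRank (X ω) s = j} = P {ω | upperRank (X ω) t = j} := by
  set σ := Equiv.swap s t
  have hS : MeasurableSet {v : ι → ℝ | upperRank v t = j} :=
    measurable_upperRank t (measurableSet_singleton j)
  have hσ : Measurable fun ω i => X ω (σ i) :=
    measurable_pi_lambda _ fun i => (measurable_pi_apply _).comp hX
  calc P {ω | upperRank (X ω) s = j}
      = P ((fun ω i => X ω (σ i)) ⁻¹' {v | upperRank v t = j}) := by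
        congr 1; ext ω
        show _ = j ↔ upperRank (X ω ∘ σ) t = j
        rw [upperRank_comp_perm, Equiv.swap_apply_right]
    _ = P {ω | upperRank (X ω) t = j} := by
      rw [← Measure.map_apply hσ hS, hexch, Measure.map_apply hX hS]; rfl

theorem ae_injective_of_measure_eq_zero
    (hties : ∀ i j, i ≠ j → P {ω | X ω i = X ω j} = 0) : ∀ᵐ ω ∂P, Injective (X ω) := by
  have h : ∀ i j, ∀ᵐ ω ∂P, X ω i = X ω j → i = j := fun i j => by
    by_cases hij : i = j
    · exact .of_forall fun _ _ => hij
    · exact ae_iff.2 (by simpa [hij] using hties i j hij)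
  filter_upwards [ae_all_iff.2 fun i => ae_all_iff.2 (h i)] with ω hω i j using hω i j

variable [IsProbabilityMeasure P]

theorem measure_upperRank_eq_inv_card (hX : Measurable X) (hexch : Exchangeable P X)
    (hties : ∀ i j, i ≠ j → P {ω | X ω i = X ω j} = 0) (t : ι) {j : ℕ}
    (hj : j < Fintype.card ι) :
    P {ω | upperRank (X ω) t = j} = (Fintype.card ι : ℝ≥0∞)⁻¹ := by
  set A : ι → Set Ω := fun s => {ω | upperRank (X ω) s = j}
  have hinj := ae_injective_of_measure_eq_zero hties
  have hdisj : Pairwise (AEDisjoint P on A) := fun s s' hss' =>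
    measure_eq_zero_iff_ae_notMem.2 <| hinj.mono fun ω hω hmem =>
      hss' (upperRank_injective hω (hmem.1.trans hmem.2.symm))
  have hcover : P (⋃ s, A s) = 1 := by
    rw [← measure_univ (μ := P), ← ae_mem_iff_measure_eq
      (MeasurableSet.iUnion fun s => measurableSet_upperRank_eq hX s j).nullMeasurableSet]
    exact hinj.mono fun ω hω => Set.mem_iUnion.2 (exists_upperRank_eq hω hj)
  refine ENNReal.eq_inv_of_mul_eq_one_left ?_
  calc P (A t) * Fintype.card ι = ∑ s, P (A s) := by
        simp [A, hexch.measure_upperRank_eq hX _ t, mul_comm]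
    _ = 1 := by
      rw [← hcover, measure_iUnion₀ hdisj fun s =>
        (measurableSet_upperRank_eq hX s j).nullMeasurableSet, tsum_fintype]

theorem measure_le_upperRank (hX : Measurable X) (hexch : Exchangeable P X)
    (hties : ∀ i j, i ≠ j → P {ω | X ω i = X ω j} = 0) (t : ι) (m : ℕ) :
    P {ω | m ≤ upperRank (X ω) t} = ((Fintype.card ι - m : ℕ) : ℝ≥0∞) / Fintype.card ι := by
  have hset : {ω | m ≤ upperRank (X ω) t} =
      (fun ω => upperRank (X ω) t) ⁻¹' ↑(Ico m (Fintype.card ι)) := by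
    ext ω; simp [upperRank_lt_card]
  rw [hset, ← sum_measure_preimage_singleton _ fun j _ => measurableSet_upperRank_eq hX t j]
  refine (sum_congr rfl fun j hj =>
    measure_upperRank_eq_inv_card hX hexch hties t (mem_Ico.1 hj).2).trans ?_
  rw [sum_const, Nat.card_Ico, nsmul_eq_mul, div_eq_mul_inv]

end Exchangeable

theorem lt_one_add_div_iff_floor_le {α N : ℝ} (hα : 0 ≤ α) (hN : 0 < N) (c : ℕ) :
    α < (1 + c) / N ↔ ⌊α * N⌋₊ ≤ c := by
  rw [lt_div_iff₀ hN, ← Nat.lt_succ_iff, Nat.floor_lt (by positivity)]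
  push_cast; rw [add_comm]

theorem ENNReal.ofReal_one_sub_div {N : ℕ} (hN : 0 < N) (m : ℕ) :
    ENNReal.ofReal (1 - m / N) = ((N - m : ℕ) : ℝ≥0∞) / N := by
  rw [one_sub_div (by positivity), ENNReal.ofReal_div_of_pos (by positivity),
    ENNReal.ofReal_sub _ (by positivity)]
  simp [ENNReal.natCast_sub]

/-- Exact coverage of split conformal prediction: for exchangeable
nonconformity scores with a continuous joint distribution (ties have
probability zero), the conformal p-value
`δ = (1 + #{i ≤ n : R_i ≥ R_{n+1}})/(n+1)` satisfies
`P(δ > α) = 1 − ⌊α(n+1)⌋/(n+1)`. -/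
theorem stmt4 {Ω : Type*} [MeasurableSpace Ω] (P : Measure Ω) [IsProbabilityMeasure P]
    (n : ℕ) (R : Fin (n + 1) → Ω → ℝ) (hmeas : ∀ i, Measurable (R i))
    (hexch : ∀ σ : Equiv.Perm (Fin (n + 1)),
      P.map (fun ω i => R (σ i) ω) = P.map (fun ω i => R i ω))
    (hties : ∀ i j : Fin (n + 1), i ≠ j → P {ω | R i ω = R j ω} = 0)
    (α : ℝ) (hα : α ∈ Set.Ioo (0 : ℝ) 1) :
    P {ω | α < (1 + ((Finset.univ.filter
        (fun i : Fin n => R (Fin.last n) ω ≤ R i.castSucc ω)).card : ℝ)) / (n + 1)}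
      = ENNReal.ofReal (1 - (⌊α * (n + 1)⌋ : ℝ) / (n + 1)) := by
  have hN : (0 : ℝ) < (n + 1 : ℕ) := by positivity
  have hfloor : (⌊α * (n + 1)⌋ : ℝ) = ⌊α * (n + 1 : ℕ)⌋₊ := by
    rw [← Nat.cast_succ, natCast_floor_eq_intCast_floor (mul_nonneg hα.1.le (by positivity))]
  have hevent : {ω | α < (1 + (#{i : Fin n | R (Fin.last n) ω ≤ R i.castSucc ω} : ℝ)) / (n + 1)}
      = {ω | ⌊α * (n + 1 : ℕ)⌋₊ ≤ upperRank (fun i => R i ω) (Fin.last n)} := by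
    ext ω
    rw [Set.mem_ofPred_eq, Set.mem_ofPred_eq,
      card_filter_le_castSucc_eq_upperRank (fun i => R i ω),
      ← Nat.cast_succ]
    exact lt_one_add_div_iff_floor_le hα.1.le hN _
  rw [hevent, measure_le_upperRank (measurable_pi_lambda _ hmeas) hexch hties, Fintype.card_fin,
    hfloor, ← Nat.cast_succ, ENNReal.ofReal_one_sub_div n.succ_pos]
end

section
/- Let α ∈ [b/(l+1), 1) with b dividing l+1, let N = (l+1)/b, let R_1,…,R_{N−1} be real numbers, and let k be the ⌈(l+1)(1−α)/b⌉-th smallest value among R_1,…,R_{N−1}. For a real number r define δ_r = (1 + |{i ∈ {1,…,N−1} : R_i ≥ r}|)/N. Then δ_r > α if and only if r ≤ k. -/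
/-!
`δ_r > α` means `#{i : r ≤ R_i} ≥ N - ⌈N(1-α)⌉`, an integer condition obtained by clearing the
denominator and using that the count is an integer. Since `b/(l+1) ≤ α < 1`, the index
`m = ⌈N(1-α)⌉` lies in `[1, N-1]`, and in the sorted list `s` of the scores the condition
`r ≤ s[m-1]` says exactly that at least `(N-1) - (m-1)` scores are `≥ r`.
-/

namespace List

theorem SortedLE.le_getElem_iff_length_sub_le_countP {α : Type*} [Preorder α] [DecidableLE α]
    {s : List α} (hs : s.SortedLE) {j : ℕ} (hj : j < s.length) (r : α) :
    r ≤ s[j] ↔ s.length - j ≤ s.countP (r ≤ ·) := by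
  have hsplit (i : ℕ) :
      s.countP (r ≤ ·) = (s.take i).countP (r ≤ ·) + (s.drop i).countP (r ≤ ·) := by
    rw [← countP_append, take_append_drop]
  constructor
  · intro h
    have hdrop : (s.drop j).countP (r ≤ ·) = s.length - j := by
      rw [countP_eq_length.2, length_drop]
      intro x hx
      obtain ⟨i, hi, rfl⟩ := getElem_of_mem hx
      simpa using h.trans (hs.getElem_le_getElem_of_le (Nat.le_add_right j i))
    have := hsplit j
    omega
  · intro h
    by_contra hlt
    have htake : (s.take (j + 1)).countP (r ≤ ·) = 0 := by
      rw [countP_eq_zero]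
      intro x hx
      obtain ⟨i, hi, rfl⟩ := getElem_of_mem hx
      simp only [getElem_take, decide_eq_true_eq]
      exact fun hri => hlt (hri.trans (hs.getElem_le_getElem_of_le (by simp at hi; omega)))
    have hdrop := (s.drop (j + 1)).countP_le_length (p := (r ≤ ·))
    rw [length_drop] at hdrop
    have := hsplit (j + 1)
    omega

end List

theorem Fin.card_filter_univ_eq_countP_ofFn {α : Type*} {n : ℕ} (R : Fin n → α) (p : α → Prop)
    [DecidablePred p] :
    (Finset.univ.filter (fun i => p (R i))).card = (List.ofFn R).countP (p ·) := by
  rw [List.ofFn_eq_map, List.countP_map, List.countP_eq_length_filter]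
  rfl

theorem lt_one_add_div_iff_sub_le_ceil {N : ℕ} (hN : 0 < N) (c : ℕ) (α : ℝ) :
    α < (1 + c) / N ↔ (N : ℤ) - c ≤ ⌈N * (1 - α)⌉ := by
  rw [lt_div_iff₀ (by exact_mod_cast hN), ← Int.sub_one_lt_iff, Int.lt_ceil]
  push_cast
  constructor <;> intro h <;> linarith

theorem ceil_mul_one_sub_mem_Icc {N : ℕ} {α : ℝ} (hα : 1 ≤ N * α) (hα1 : α < 1) :
    ⌈(N : ℝ) * (1 - α)⌉ ∈ Set.Icc 1 ((N : ℤ) - 1) := by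
  have hN : (0 : ℝ) < N := by nlinarith
  refine ⟨Int.ceil_pos.2 (by nlinarith), Int.ceil_le.2 ?_⟩
  push_cast
  linarith

theorem lt_one_add_card_div_iff_le_insertionSort_getD {N : ℕ} {α : ℝ} (hα : 1 ≤ N * α)
    (hα1 : α < 1) (R : Fin (N - 1) → ℝ) (r : ℝ) :
    α < (1 + ((Finset.univ.filter (fun i => r ≤ R i)).card : ℝ)) / N ↔
      r ≤ ((List.ofFn R).insertionSort (· ≤ ·)).getD ((⌈(N : ℝ) * (1 - α)⌉).toNat - 1) 0 := by
  obtain ⟨hm1, hmN⟩ := ceil_mul_one_sub_mem_Icc hα hα1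
  set s := (List.ofFn R).insertionSort (· ≤ ·)
  have hlen : s.length = N - 1 := by simp [s, List.length_insertionSort]
  have hcount : s.countP (r ≤ ·) = (Finset.univ.filter (fun i => r ≤ R i)).card := by
    rw [(List.perm_insertionSort _ _).countP_eq, Fin.card_filter_univ_eq_countP_ofFn]
  have hj : (⌈(N : ℝ) * (1 - α)⌉).toNat - 1 < s.length := by omega
  rw [lt_one_add_div_iff_sub_le_ceil (by omega), List.getD_eq_getElem _ _ hj,
    List.sortedLE_insertionSort.le_getElem_iff_length_sub_le_countP hj, hcount, hlen]
  omega

theorem stmt6_general (l b : ℕ) (hdvd : b ∣ (l + 1)) (α : ℝ)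
    (hα : α ∈ Set.Ico ((b : ℝ) / ((l : ℝ) + 1)) 1)
    (R : Fin ((l + 1) / b - 1) → ℝ) (r : ℝ) :
    letI N : ℕ := (l + 1) / b
    letI m : ℕ := (⌈((l : ℝ) + 1) * (1 - α) / b⌉).toNat
    letI k : ℝ := ((List.ofFn R).insertionSort (· ≤ ·)).getD (m - 1) 0
    (α < (1 + ((Finset.univ.filter (fun i : Fin ((l + 1) / b - 1) => r ≤ R i)).card : ℝ)) / N
      ↔ r ≤ k) := by
  obtain ⟨hα0, hα1⟩ := hα
  have hb : (0 : ℝ) < b := by exact_mod_cast Nat.pos_of_dvd_of_pos hdvd l.succ_pos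
  have hNb : (((l + 1) / b : ℕ) : ℝ) * b = (l : ℝ) + 1 := by
    exact_mod_cast Nat.div_mul_cancel hdvd
  have hNα : 1 ≤ (((l + 1) / b : ℕ) : ℝ) * α := by
    rw [div_le_iff₀ (by linarith), ← hNb] at hα0
    nlinarith
  have hm : ((l : ℝ) + 1) * (1 - α) / b = (((l + 1) / b : ℕ) : ℝ) * (1 - α) := by
    rw [← hNb]
    field_simp
  simp only [hm]
  exact lt_one_add_card_div_iff_le_insertionSort_getD hNα hα1 R r

/-- Closed-form prediction band for the blocked split conformal procedure:
with `N = (l+1)/b` and `k` the `⌈(l+1)(1−α)/b⌉`-th smallest of the `N−1`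
calibration block scores, the condition
`δ_r = (1 + #{i : R_i ≥ r})/N > α` holds iff `r ≤ k`. -/
theorem stmt6 (l b : ℕ) (hb : 1 ≤ b) (hdvd : b ∣ (l + 1)) (α : ℝ)
    (hα : α ∈ Set.Ico ((b : ℝ) / ((l : ℝ) + 1)) 1)
    (R : Fin ((l + 1) / b - 1) → ℝ) (r : ℝ) :
    letI N : ℕ := (l + 1) / b
    letI m : ℕ := (⌈((l : ℝ) + 1) * (1 - α) / b⌉).toNat
    letI k : ℝ := ((List.ofFn R).insertionSort (· ≤ ·)).getD (m - 1) 0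
    (α < (1 + ((Finset.univ.filter (fun i : Fin ((l + 1) / b - 1) => r ≤ R i)).card : ℝ)) / N
      ↔ r ≤ k) :=
  stmt6_general l b hdvd α hα R r
end

section
/- Let r_1,…,r_n, r*_1,…,r*_n, and r, r* be real numbers with (1/n)∑_i (r_i − r*_i)² ≤ δ² and |r − r*| ≤ δ. Let G̃(a) = (1/n)|{i : r_i ≥ a}| and G̃*(a) = (1/n)|{i : r*_i ≥ a}|. Then G̃(r) ≤ G̃*(r* − 2√δ) + δ and G̃(r) ≥ G̃*(r* + 2√δ) − δ. -/
/-!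
Call an index exceptional when `√δ < |r i - r* i|`. By Markov's inequality for the mean square
deviation there are at most `n δ` exceptional indices. Off the exceptional set the two score
vectors differ by at most `√δ`, and `|x - x*| ≤ δ ≤ √δ` because `δ ≤ 1`, so moving the threshold
by `2 √δ` absorbs both perturbations.
-/

open Finset

variable {ι : Type*} [Fintype ι]

lemma card_filter_le_le_card_filter_add_card (r r' : ι → ℝ) {a b ε : ℝ} (h : b + ε ≤ a) :
    #{i | a ≤ r i} ≤ #{i | b ≤ r' i} + #{i | ε < |r i - r' i|} := by
  classical
  refine (card_le_card fun i hi => ?_).trans (card_union_le _ _)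
  simp only [mem_union, mem_filter, mem_univ, true_and, or_iff_not_imp_right, not_lt] at hi ⊢
  intro hε
  linarith [(abs_le.mp hε).2]

lemma card_filter_sqrt_lt_abs_le (f : ι → ℝ) {c δ : ℝ} (hδ : 0 ≤ δ)
    (h : ∑ i, f i ^ 2 ≤ c * δ ^ 2) : (#{i | √δ < |f i|} : ℝ) ≤ c * δ := by
  obtain rfl | hδ := hδ.eq_or_lt
  · have hf : ∀ i, f i = 0 := fun i => by
      have := (sum_eq_zero_iff_of_nonneg fun j _ => sq_nonneg (f j)).mp
        (le_antisymm (by simpa using h) (sum_nonneg fun j _ => sq_nonneg (f j))) i (mem_univ i)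
      exact pow_eq_zero_iff two_ne_zero |>.mp this
    simp [hf]
  have hmarkov : #{i | √δ < |f i|} • δ ≤ ∑ i, f i ^ 2 := by
    refine (card_nsmul_le_sum _ _ _ fun i hi => ?_).trans
      (sum_le_sum_of_subset_of_nonneg (subset_univ _) fun j _ _ => sq_nonneg (f j))
    rw [← sq_abs]
    exact (Real.lt_sq_of_sqrt_lt (mem_filter.mp hi).2).le
  rw [nsmul_eq_mul] at hmarkov
  exact le_of_mul_le_mul_right (by nlinarith) hδ

theorem stmt11_general (n : ℕ) (hn : 0 < n) (r rstar : Fin n → ℝ) (x xstar δ : ℝ)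
    (hδ1 : δ ≤ 1)
    (h2 : (1 / (n : ℝ)) * ∑ i, (r i - rstar i) ^ 2 ≤ δ ^ 2)
    (h1 : |x - xstar| ≤ δ) :
    letI Gt : ℝ → ℝ := fun a => ((Finset.univ.filter (fun i : Fin n => a ≤ r i)).card : ℝ) / n
    letI Gs : ℝ → ℝ := fun a => ((Finset.univ.filter (fun i : Fin n => a ≤ rstar i)).card : ℝ) / n
    Gt x ≤ Gs (xstar - 2 * Real.sqrt δ) + δ ∧ Gs (xstar + 2 * Real.sqrt δ) - δ ≤ Gt x := by
  have hn' : (0 : ℝ) < n := Nat.cast_pos.mpr hn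
  have hδ0 : 0 ≤ δ := (abs_nonneg _).trans h1
  have hδ_le_sqrt : δ ≤ √δ := Real.le_sqrt_self_iff.mpr hδ1
  have hx := abs_le.mp h1
  have hexc : (#{i | √δ < |r i - rstar i|} : ℝ) / n ≤ δ := by
    rw [div_le_iff₀ hn', mul_comm]
    refine card_filter_sqrt_lt_abs_le _ hδ0 ?_
    rwa [one_div, inv_mul_le_iff₀ hn'] at h2
  have hupper := card_filter_le_le_card_filter_add_card r rstar
    (a := x) (b := xstar - 2 * √δ) (ε := √δ) (by linarith)
  have hlower := card_filter_le_le_card_filter_add_card rstar r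
    (a := xstar + 2 * √δ) (b := x) (ε := √δ) (by linarith)
  simp only [abs_sub_comm (rstar _)] at hlower
  dsimp only
  constructor
  · calc _ ≤ ((#{i | xstar - 2 * √δ ≤ rstar i} + #{i | √δ < |r i - rstar i|} : ℕ) : ℝ) / n :=
          div_le_div_of_nonneg_right (by exact_mod_cast hupper) hn'.le
      _ ≤ _ := by push_cast; rw [add_div]; linarith
  · rw [sub_le_iff_le_add]
    calc _ ≤ ((#{i | x ≤ r i} + #{i | √δ < |r i - rstar i|} : ℕ) : ℝ) / n :=
          div_le_div_of_nonneg_right (by exact_mod_cast hlower) hn'.le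
      _ ≤ _ := by push_cast; rw [add_div]; linarith

/-- Empirical one-sided distribution functions of perturbed versus oracle
scores: if `(1/n)∑(r_i − r*_i)² ≤ δ²` and `|r − r*| ≤ δ` (with `0 ≤ δ ≤ 1`),
then `G̃(r) ≤ G̃*(r* − 2√δ) + δ` and `G̃(r) ≥ G̃*(r* + 2√δ) − δ`. -/
theorem stmt11 (n : ℕ) (hn : 0 < n) (r rstar : Fin n → ℝ) (x xstar δ : ℝ)
    (hδ0 : 0 ≤ δ) (hδ1 : δ ≤ 1)
    (h2 : (1 / (n : ℝ)) * ∑ i, (r i - rstar i) ^ 2 ≤ δ ^ 2)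
    (h1 : |x - xstar| ≤ δ) :
    letI Gt : ℝ → ℝ := fun a => ((Finset.univ.filter (fun i : Fin n => a ≤ r i)).card : ℝ) / n
    letI Gs : ℝ → ℝ := fun a => ((Finset.univ.filter (fun i : Fin n => a ≤ rstar i)).card : ℝ) / n
    Gt x ≤ Gs (xstar - 2 * Real.sqrt δ) + δ ∧ Gs (xstar + 2 * Real.sqrt δ) - δ ≤ Gt x :=
  stmt11_general n hn r rstar x xstar δ hδ1 h2 h1
end
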